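/- In misère Partizan Kayles, for all natural numbers k ≥ 1 and j ≥ 1, the position kS₁ + jS₂ has the same misère outcome as the abstract game {(k−1)S₁ + jS₂ | kS₁ + (j−1)S₂} in every Kayles context: after any Left move from kS₁ + jS₂ the resulting position is either (k−1)S₁ + jS₂ or (k+1)S₁ + (j−1)S₂, and modulo the Kayles universe the latter option is dominated by the former (i.e., (k−1)S₁ + jS₂ ≥ (k+1)S₁ + (j−1)S₂ modulo K), while Right's only move up to equivalence is to kS₁ + (j−1)S₂. -/

import Mathlib

/-- Add a strip of length `k` to a position (strips of length 0 are discarded). -/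
def addStrip (m : Multiset ℕ) (k : ℕ) : Multiset ℕ := if k = 0 then m else k ::ₘ m

/-- Left removes one square from a strip of length `n ≥ 1`, leaving strips `i` and `n-1-i`. -/
def LeftMove (G G' : Multiset ℕ) : Prop :=
  ∃ n ∈ G, ∃ i, i + 1 ≤ n ∧ G' = addStrip (addStrip (G.erase n) i) (n - 1 - i)

/-- Right removes two adjacent squares from a strip of length `n ≥ 2`, leaving `i` and `n-2-i`. -/
def RightMove (G G' : Multiset ℕ) : Prop :=
  ∃ n ∈ G, ∃ i, i + 2 ≤ n ∧ G' = addStrip (addStrip (G.erase n) i) (n - 2 - i)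

mutual
  /-- Misère play: Left, to move, wins (a player unable to move wins). -/
  inductive LeftWinsMover : Multiset ℕ → Prop
    | cannot (G : Multiset ℕ) : (¬ ∃ G', LeftMove G G') → LeftWinsMover G
    | move (G G' : Multiset ℕ) : LeftMove G G' → LeftWinsWaiter G' → LeftWinsMover G
  /-- Misère play: Left wins with Right to move. -/
  inductive LeftWinsWaiter : Multiset ℕ → Prop
    | intro (G : Multiset ℕ) : (∃ G', RightMove G G') →
        (∀ G', RightMove G G' → LeftWinsMover G') → LeftWinsWaiter G
end

inductive Outcome | L | N | P | R
  deriving DecidableEq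

open Classical in
/-- The misère outcome `o⁻(G)`. -/
noncomputable def outcome (G : Multiset ℕ) : Outcome :=
  if LeftWinsMover G then (if LeftWinsWaiter G then Outcome.L else Outcome.N)
  else (if LeftWinsWaiter G then Outcome.P else Outcome.R)

/-- The partial order on outcomes: `L` greatest, `R` least, `N` and `P` incomparable. -/
def Outcome.le (a b : Outcome) : Prop := a = b ∨ a = Outcome.R ∨ b = Outcome.L

/-- `pos k j` is the position `kS₁ + jS₂`. -/
def pos (k j : ℕ) : Multiset ℕ := Multiset.replicate k 1 + Multiset.replicate j 2

/-!
Weight a strip of length `n` by `1`, `-1`, `0` according as `n ≡ 1, 2, 0 (mod 3)`, and a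
position by the sum `v` of its weights. A Left move changes `v` by `-1` or `+2`, a Right move by
`+1` or `-2`; Right can always achieve `+1`, and Left can achieve `-1` unless all her strips have
length 2. By induction, Left wins moving first iff `v ≤ 0` and `v ≡ 0`, and moving second iff
`v ≤ 0` and `v ≡ 2 (mod 3)`. The options `(k+1)S₁ + (j-1)S₂` and `(k-1)S₁ + jS₂` have values
differing by exactly 3, which preserves the residue, so either both values are `≤ 0` and the
outcomes coincide, or the larger one has outcome `R`.
-/

namespace PartizanKayles

def stripValue (n : ℕ) : ℤ := if n % 3 = 1 then 1 else if n % 3 = 2 then -1 else 0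

def value (G : Multiset ℕ) : ℤ := (G.map stripValue).sum

theorem stripValue_zero : stripValue 0 = 0 := rfl

theorem stripValue_one : stripValue 1 = 1 := rfl

theorem stripValue_two : stripValue 2 = -1 := rfl

theorem stripValue_nonneg {n : ℕ} (h : n % 3 ≠ 2) : 0 ≤ stripValue n := by
  unfold stripValue; split_ifs <;> omega

theorem stripValue_nonpos {n : ℕ} (h : n % 3 ≠ 1) : stripValue n ≤ 0 := by
  unfold stripValue; split_ifs <;> omega

theorem stripValue_leftSplit {n i : ℕ} (hi : i + 1 ≤ n) :
    stripValue i + stripValue (n - 1 - i) = stripValue n - 1 ∨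
      stripValue i + stripValue (n - 1 - i) = stripValue n + 2 := by
  unfold stripValue; split_ifs <;> omega

theorem stripValue_rightSplit {n i : ℕ} (hi : i + 2 ≤ n) :
    stripValue i + stripValue (n - 2 - i) = stripValue n + 1 ∨
      stripValue i + stripValue (n - 2 - i) = stripValue n - 2 := by
  unfold stripValue; split_ifs <;> omega

theorem exists_leftSplit_eq_sub_one {n : ℕ} (h1 : 1 ≤ n) (h2 : n ≠ 2) :
    ∃ i, i + 1 ≤ n ∧ stripValue i + stripValue (n - 1 - i) = stripValue n - 1 := by
  by_cases h3 : n % 3 = 2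
  · refine ⟨2, by omega, ?_⟩
    unfold stripValue; split_ifs <;> omega
  · refine ⟨0, by omega, ?_⟩
    rw [stripValue_zero, zero_add, Nat.sub_zero]
    unfold stripValue; split_ifs <;> omega

theorem exists_rightSplit_eq_add_one {n : ℕ} (h : 2 ≤ n) :
    ∃ i, i + 2 ≤ n ∧ stripValue i + stripValue (n - 2 - i) = stripValue n + 1 := by
  by_cases h3 : n % 3 = 1
  · refine ⟨1, by omega, ?_⟩
    unfold stripValue; split_ifs <;> omega
  · refine ⟨0, by omega, ?_⟩
    rw [stripValue_zero, zero_add, Nat.sub_zero]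
    unfold stripValue; split_ifs <;> omega

theorem value_cons (n : ℕ) (G : Multiset ℕ) : value (n ::ₘ G) = stripValue n + value G := by
  simp [value]

theorem value_add (G H : Multiset ℕ) : value (G + H) = value G + value H := by
  simp [value]

theorem value_addStrip (G : Multiset ℕ) (n : ℕ) :
    value (addStrip G n) = value G + stripValue n := by
  unfold addStrip
  split_ifs with h
  · rw [h, stripValue_zero, add_zero]
  · rw [value_cons, add_comm]

theorem sum_addStrip (G : Multiset ℕ) (n : ℕ) : (addStrip G n).sum = G.sum + n := by
  unfold addStrip
  split_ifs with h
  · rw [h, add_zero]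
  · rw [Multiset.sum_cons, add_comm]

theorem value_erase {G : Multiset ℕ} {n : ℕ} (hn : n ∈ G) :
    value (G.erase n) = value G - stripValue n := by
  rw [← Multiset.cons_erase hn, value_cons, Multiset.erase_cons_head]
  ring

theorem value_split {G : Multiset ℕ} {n : ℕ} (hn : n ∈ G) (i j : ℕ) :
    value (addStrip (addStrip (G.erase n) i) j) =
      value G - stripValue n + (stripValue i + stripValue j) := by
  rw [value_addStrip, value_addStrip, value_erase hn]
  ring

theorem sum_split_lt {G : Multiset ℕ} {n i j : ℕ} (hn : n ∈ G) (h : i + j < n) :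
    (addStrip (addStrip (G.erase n) i) j).sum < G.sum := by
  rw [sum_addStrip, sum_addStrip, ← Multiset.sum_erase hn]
  omega

theorem value_nonneg {G : Multiset ℕ} (h : ∀ n ∈ G, n % 3 ≠ 2) : 0 ≤ value G := by
  simpa [value] using Multiset.sum_map_le_sum_map (fun _ => (0 : ℤ)) stripValue
    fun n hn => stripValue_nonneg (h n hn)

theorem value_nonpos {G : Multiset ℕ} (h : ∀ n ∈ G, n % 3 ≠ 1) : value G ≤ 0 := by
  simpa [value] using Multiset.sum_map_le_sum_map stripValue (fun _ => (0 : ℤ))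
    fun n hn => stripValue_nonpos (h n hn)

theorem LeftMove.value_eq {G G' : Multiset ℕ} (h : LeftMove G G') :
    value G' = value G - 1 ∨ value G' = value G + 2 := by
  obtain ⟨n, hn, i, hi, rfl⟩ := h
  rw [value_split hn]
  have := stripValue_leftSplit hi
  omega

theorem RightMove.value_eq {G G' : Multiset ℕ} (h : RightMove G G') :
    value G' = value G + 1 ∨ value G' = value G - 2 := by
  obtain ⟨n, hn, i, hi, rfl⟩ := h
  rw [value_split hn]
  have := stripValue_rightSplit hi
  omega

theorem LeftMove.sum_lt {G G' : Multiset ℕ} (h : LeftMove G G') : G'.sum < G.sum := by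
  obtain ⟨n, hn, i, hi, rfl⟩ := h
  exact sum_split_lt hn (by omega)

theorem RightMove.sum_lt {G G' : Multiset ℕ} (h : RightMove G G') : G'.sum < G.sum := by
  obtain ⟨n, hn, i, hi, rfl⟩ := h
  exact sum_split_lt hn (by omega)

theorem value_eq_zero_of_not_exists_leftMove {G : Multiset ℕ} (h : ¬∃ G', LeftMove G G') :
    value G = 0 := by
  have hG : ∀ n ∈ G, n = 0 := fun n hn => by
    by_contra hn0
    exact h ⟨_, n, hn, 0, by omega, rfl⟩
  refine Multiset.sum_eq_zero fun v hv => ?_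
  obtain ⟨n, hn, rfl⟩ := Multiset.mem_map.1 hv
  rw [hG n hn, stripValue_zero]

theorem exists_rightMove_of_value_neg {G : Multiset ℕ} (h : value G < 0) :
    ∃ G', RightMove G G' := by
  by_contra hno
  have hG : ∀ n ∈ G, n % 3 ≠ 2 := fun n hn => by
    by_cases hn2 : 2 ≤ n
    · exact absurd ⟨_, n, hn, 0, hn2, rfl⟩ hno
    · omega
  exact h.not_ge (value_nonneg hG)

theorem exists_rightMove_value_eq_add_one {G : Multiset ℕ} (h : ∃ G', RightMove G G') :
    ∃ G', RightMove G G' ∧ value G' = value G + 1 := by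
  obtain ⟨_, n, hn, i₀, hi₀, -⟩ := h
  obtain ⟨i, hi, hsplit⟩ := exists_rightSplit_eq_add_one (show 2 ≤ n by omega)
  refine ⟨_, ⟨n, hn, i, hi, rfl⟩, ?_⟩
  rw [value_split hn, hsplit]
  ring

theorem exists_leftMove_of_value_nonpos {G : Multiset ℕ} (h : ∃ G', LeftMove G G')
    (hv : value G ≤ 0) (h3 : value G % 3 = 0) :
    ∃ G', LeftMove G G' ∧ value G' ≤ 0 ∧ value G' % 3 = 2 := by
  by_cases hstrip : ∃ n ∈ G, 1 ≤ n ∧ n ≠ 2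
  · obtain ⟨n, hn, h1, h2⟩ := hstrip
    obtain ⟨i, hi, hsplit⟩ := exists_leftSplit_eq_sub_one h1 h2
    refine ⟨_, ⟨n, hn, i, hi, rfl⟩, ?_⟩
    rw [value_split hn, hsplit]
    constructor <;> omega
  · -- Only strips of length 0 and 2 remain, so `value G ≤ -1`, hence `≤ -3`, and splitting
    -- a 2 into 0 + 1 raises the value by 2.
    obtain ⟨_, n, hn, i, hi, -⟩ := h
    obtain rfl : n = 2 := by
      by_contra hn2
      exact hstrip ⟨n, hn, by omega, hn2⟩
    have hrest : value (G.erase 2) ≤ 0 := value_nonpos fun m hm hm1 =>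
      hstrip ⟨m, Multiset.mem_of_mem_erase hm, by omega, by omega⟩
    refine ⟨_, ⟨2, hn, 0, by omega, rfl⟩, ?_⟩
    rw [value_erase hn, stripValue_two] at hrest
    rw [value_split hn, stripValue_two, stripValue_zero, show stripValue (2 - 1 - 0) = 1 from rfl]
    omega

mutual

theorem leftWinsMover_iff (G : Multiset ℕ) :
    LeftWinsMover G ↔ value G ≤ 0 ∧ value G % 3 = 0 := by
  constructor
  · rintro (⟨_, hno⟩ | ⟨_, G', hmove, hwin⟩)
    · rw [value_eq_zero_of_not_exists_leftMove hno]
      decide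
    · have := LeftMove.sum_lt hmove
      have := (leftWinsWaiter_iff G').1 hwin
      rcases LeftMove.value_eq hmove with h | h <;> omega
  · rintro ⟨hv, h3⟩
    by_cases h : ∃ G', LeftMove G G'
    · obtain ⟨G', hmove, hG'⟩ := exists_leftMove_of_value_nonpos h hv h3
      have := LeftMove.sum_lt hmove
      exact .move G G' hmove ((leftWinsWaiter_iff G').2 hG')
    · exact .cannot G h
termination_by G.sum

theorem leftWinsWaiter_iff (G : Multiset ℕ) :
    LeftWinsWaiter G ↔ value G ≤ 0 ∧ value G % 3 = 2 := by
  constructor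
  · rintro ⟨_, h, hwin⟩
    obtain ⟨G', hmove, hv⟩ := exists_rightMove_value_eq_add_one h
    have := RightMove.sum_lt hmove
    have := (leftWinsMover_iff G').1 (hwin G' hmove)
    omega
  · rintro ⟨hv, h3⟩
    refine .intro G (exists_rightMove_of_value_neg (by omega)) fun G' hmove => ?_
    have := RightMove.sum_lt hmove
    exact (leftWinsMover_iff G').2 (by rcases RightMove.value_eq hmove with h | h <;> omega)
termination_by G.sum

end

theorem outcome_le_of_value_eq_add_three {G H : Multiset ℕ} (h : value G = value H + 3) :
    (outcome G).le (outcome H) := by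
  by_cases hG : value G ≤ 0
  · have hmover : LeftWinsMover G ↔ LeftWinsMover H := by
      rw [leftWinsMover_iff, leftWinsMover_iff]; omega
    have hwaiter : LeftWinsWaiter G ↔ LeftWinsWaiter H := by
      rw [leftWinsWaiter_iff, leftWinsWaiter_iff]; omega
    left
    rw [outcome, outcome, propext hmover, propext hwaiter]
  · have hmover : ¬LeftWinsMover G := by rw [leftWinsMover_iff]; omega
    have hwaiter : ¬LeftWinsWaiter G := by rw [leftWinsWaiter_iff]; omega
    right; left
    simp only [outcome, hmover, hwaiter, if_false]

theorem value_pos_eq (k j : ℕ) : value (pos k j) = k - j := by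
  simp only [pos, value, Multiset.map_add, Multiset.map_replicate, Multiset.sum_add,
    Multiset.sum_replicate, stripValue_one, stripValue_two, nsmul_eq_mul, mul_one, mul_neg]
  ring

theorem eq_one_or_two_of_mem_pos {n k j : ℕ} (h : n ∈ pos k j) : n = 1 ∨ n = 2 := by
  simp only [pos, Multiset.mem_add, Multiset.mem_replicate] at h
  omega

theorem cons_one_pos (k j : ℕ) : 1 ::ₘ pos k j = pos (k + 1) j := by
  simp [pos, Multiset.replicate_succ]

theorem pos_erase_one (k j : ℕ) : (pos k j).erase 1 = pos (k - 1) j := by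
  cases k with
  | zero => exact Multiset.erase_of_notMem fun h => by simp [pos, Multiset.mem_replicate] at h
  | succ k => rw [← cons_one_pos, Multiset.erase_cons_head, Nat.add_sub_cancel]

theorem pos_erase_two (k j : ℕ) : (pos k j).erase 2 = pos k (j - 1) := by
  cases j with
  | zero => exact Multiset.erase_of_notMem fun h => by simp [pos, Multiset.mem_replicate] at h
  | succ j =>
    rw [pos, Multiset.replicate_succ, Multiset.add_cons, Multiset.erase_cons_head, Nat.add_sub_cancel]
    rfl

theorem eq_of_leftMove_pos {k j : ℕ} {G' : Multiset ℕ} (h : LeftMove (pos k j) G') :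
    G' = pos (k - 1) j ∨ G' = pos (k + 1) (j - 1) := by
  obtain ⟨n, hn, i, hi, rfl⟩ := h
  rcases eq_one_or_two_of_mem_pos hn with rfl | rfl
  · obtain rfl : i = 0 := by omega
    simp [addStrip, pos_erase_one]
  · obtain rfl | rfl : i = 0 ∨ i = 1 := by omega
    all_goals simp [addStrip, pos_erase_two, cons_one_pos]

theorem eq_of_rightMove_pos {k j : ℕ} {G' : Multiset ℕ} (h : RightMove (pos k j) G') :
    G' = pos k (j - 1) := by
  obtain ⟨n, hn, i, hi, rfl⟩ := h
  rcases eq_one_or_two_of_mem_pos hn with rfl | rfl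
  · omega
  · obtain rfl : i = 0 := by omega
    simp [addStrip, pos_erase_two]

end PartizanKayles

theorem kayles_options_of_ones_twos (k j : ℕ) (hk : 1 ≤ k) (hj : 1 ≤ j) :
    (∀ G' : Multiset ℕ, LeftMove (pos k j) G' →
      G' = pos (k - 1) j ∨ G' = pos (k + 1) (j - 1)) ∧
    (∀ X : Multiset ℕ, 0 ∉ X →
      Outcome.le (outcome (pos (k + 1) (j - 1) + X)) (outcome (pos (k - 1) j + X))) ∧
    (∀ G' : Multiset ℕ, RightMove (pos k j) G' → G' = pos k (j - 1)) := by
  refine ⟨fun _ => PartizanKayles.eq_of_leftMove_pos,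
    fun X _ => PartizanKayles.outcome_le_of_value_eq_add_three ?_,
    fun _ => PartizanKayles.eq_of_rightMove_pos⟩
  rw [PartizanKayles.value_add, PartizanKayles.value_add, PartizanKayles.value_pos_eq,
    PartizanKayles.value_pos_eq]
  omega
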